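/- Let N be odd and ζ = exp(2πi/N). The rational function Q(x) = ∏_{j=0}^{N-1} S(x | zζ^j), where z is any N-th root of 1 - x^N and S(x|z) = Σ_{k=1}^{N} ∏_{i=1}^{k} z/(1-xζ^i), is independent of the choice of z and satisfies Q(xζ) = Q(x) · (1-xζ)^N/(1-x^N). -/

import Mathlib

open Complex Real

/-- `S(x|z) = Σ_{k=1}^{N} ∏_{i=1}^{k} z/(1 - xζ^i)`. -/
noncomputable def Sfun (N : ℕ) (ζ x z : ℂ) : ℂ :=
  ∑ k ∈ Finset.range N, ∏ i ∈ Finset.range (k + 1), z / (1 - x * ζ ^ (i + 1))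

/-!
The numbers `z ζ^j`, `j < N`, are all the `N`-th roots of `1 - x^N`, so `Q(x)` is a product over
that multiset and does not depend on `z`. For the shift, put `g i = z / (1 - x ζ^(i+1))`. Since
`∏_{i<N} (1 - x ζ^(i+1)) = 1 - x^N = z^N`, the partial products `g 0 ⋯ g (k-1)` are `N`-periodic
in `k`; replacing `x` by `xζ` shifts `g` by one index, whence `S(xζ|z) = (1 - xζ)/z · S(x|z)`.
Multiplying over `z ζ^j`, whose product is `z^N = 1 - x^N` because `N` is odd, gives the
functional equation.
-/

open Finset Polynomial

lemma Finset.sum_range_succ_eq_sum_range {M : Type*} [AddCommMonoid M] {f : ℕ → M} {n : ℕ}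
    (h : f n = f 0) : ∑ i ∈ range n, f (i + 1) = ∑ i ∈ range n, f i := by
  cases n with
  | zero => rfl
  | succ n => rw [sum_range_succ (fun i ↦ f (i + 1)), sum_range_succ', h]

lemma Finset.sum_range_prod_range_add_two {R : Type*} [CommSemiring R] {g : ℕ → R} {n : ℕ}
    (hper : g n = g 0) (hprod : ∏ i ∈ range n, g i = 1) :
    ∑ k ∈ range n, ∏ i ∈ range (k + 2), g i = ∑ k ∈ range n, ∏ i ∈ range (k + 1), g i :=
  sum_range_succ_eq_sum_range (f := fun k ↦ ∏ i ∈ range (k + 1), g i) <| by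
    simp only [prod_range_succ, hprod, hper, range_zero, prod_empty]

lemma prod_range_mul_pow_eq_pow_of_odd {M : Type*} [CommMonoid M] {ζ : M} {n : ℕ}
    (hζ : ζ ^ n = 1) (hn : Odd n) (α : M) : ∏ j ∈ range n, α * ζ ^ j = α ^ n := by
  obtain ⟨m, rfl⟩ := hn
  have hsum : ∑ j ∈ range (2 * m + 1), j = (2 * m + 1) * m := by
    rw [sum_range_id, Nat.add_sub_cancel, mul_left_comm, Nat.mul_div_cancel_left _ two_pos]
  rw [prod_mul_distrib, prod_const, card_range, prod_pow_eq_pow_sum, hsum, pow_mul, hζ, one_pow,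
    mul_one]

namespace IsPrimitiveRoot

variable {R : Type*} [CommRing R] [IsDomain R] {ζ : R} {n : ℕ}

lemma prod_range_mul_pow_eq_prod_nthRoots {M : Type*} [CommMonoid M] (hζ : IsPrimitiveRoot ζ n)
    (f : R → M) {α a : R} (hα : α ^ n = a) :
    ∏ j ∈ range n, f (α * ζ ^ j) = ((nthRoots n a).map f).prod := by
  rw [hζ.nthRoots_eq hα, Multiset.map_map, prod_eq_multiset_prod, range_val]
  simp only [Function.comp_def, mul_comm]

lemma prod_range_mul_pow_eq_of_pow_eq {M : Type*} [CommMonoid M] (hζ : IsPrimitiveRoot ζ n)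
    (f : R → M) {α β : R} (h : α ^ n = β ^ n) :
    ∏ j ∈ range n, f (α * ζ ^ j) = ∏ j ∈ range n, f (β * ζ ^ j) := by
  rw [hζ.prod_range_mul_pow_eq_prod_nthRoots f h, hζ.prod_range_mul_pow_eq_prod_nthRoots f rfl]

lemma prod_one_sub_pow_mul (hζ : IsPrimitiveRoot ζ n) (hn : 0 < n) {α a : R} (hα : α ^ n = a) :
    ∏ i ∈ range n, (1 - ζ ^ i * α) = 1 - a := by
  simpa [eval_prod] using congrArg (eval 1) (X_pow_sub_C_eq_prod hζ hn hα).symm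

end IsPrimitiveRoot

lemma Sfun_mul_zeta {N : ℕ} {ζ x z : ℂ} (hζ : IsPrimitiveRoot ζ N) (hz : z ^ N = 1 - x ^ N)
    (hxN : x ^ N ≠ 1) : Sfun N ζ (x * ζ) z = (1 - x * ζ) / z * Sfun N ζ x z := by
  have hN : 0 < N := Nat.pos_of_ne_zero (by rintro rfl; exact hxN (pow_zero x))
  have hden : ∏ i ∈ range N, (1 - x * ζ ^ (i + 1)) = 1 - x ^ N := by
    rw [← hζ.prod_one_sub_pow_mul hN (α := x * ζ) (by rw [mul_pow, hζ.pow_eq_one, mul_one])]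
    exact prod_congr rfl fun i _ ↦ by ring
  have h1x : 1 - x ^ N ≠ 0 := sub_ne_zero.mpr hxN.symm
  have hxζ : 1 - x * ζ ≠ 0 := by
    simpa using prod_ne_zero_iff.mp (hden.trans_ne h1x) 0 (mem_range.mpr hN)
  have hz0 : z ≠ 0 := by rintro rfl; exact h1x (hz ▸ zero_pow hN.ne')
  set g : ℕ → ℂ := fun i ↦ z / (1 - x * ζ ^ (i + 1))
  have hg : g N = g 0 := by simp [g, pow_succ, hζ.pow_eq_one]
  have hprod : ∏ i ∈ range N, g i = 1 := by
    rw [prod_div_distrib, prod_const, card_range, hden, hz, div_self h1x]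
  -- the `k`-th term of `S(xζ|z)` is `g 1 ⋯ g (k + 1)`
  have key : g 0 * Sfun N ζ (x * ζ) z = Sfun N ζ x z := by
    rw [Sfun, mul_sum, Sfun, ← sum_range_prod_range_add_two hg hprod]
    refine sum_congr rfl fun k _ ↦ ?_
    rw [prod_range_succ' g (k + 1)]
    simp only [g, mul_comm (z / _), mul_assoc, ← pow_succ']
  have hg0 : (1 - x * ζ) / z * g 0 = 1 := by
    simp only [g, zero_add, pow_one]
    field_simp
  rw [← key, ← mul_assoc, hg0, one_mul]

theorem Qfun_indep_and_shift_general (N : ℕ) (hN : Odd N)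
    (ζ : ℂ) (hζ : ζ = Complex.exp (2 * π * Complex.I / N))
    (x z z' : ℂ) (hz : z ^ N = 1 - x ^ N) (hz' : z' ^ N = 1 - x ^ N)
    (hxN : x ^ N ≠ 1) :
    (∏ j ∈ Finset.range N, Sfun N ζ x (z * ζ ^ j)) =
      (∏ j ∈ Finset.range N, Sfun N ζ x (z' * ζ ^ j)) ∧
    (∏ j ∈ Finset.range N, Sfun N ζ (x * ζ) (z * ζ ^ j)) =
      (∏ j ∈ Finset.range N, Sfun N ζ x (z * ζ ^ j)) * (1 - x * ζ) ^ N / (1 - x ^ N) := by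
  have hprim : IsPrimitiveRoot ζ N := hζ ▸ Complex.isPrimitiveRoot_exp N hN.pos.ne'
  refine ⟨hprim.prod_range_mul_pow_eq_of_pow_eq (Sfun N ζ x) (hz.trans hz'.symm), ?_⟩
  have hshift (j : ℕ) := Sfun_mul_zeta hprim (z := z * ζ ^ j)
    (by rw [mul_pow, pow_right_comm, hprim.pow_eq_one, one_pow, mul_one, hz]) hxN
  rw [prod_congr rfl fun j _ ↦ hshift j, prod_mul_distrib, prod_div_distrib, prod_const,
    card_range, prod_range_mul_pow_eq_pow_of_odd hprim.pow_eq_one hN, hz]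
  ring

/-- For `N` odd and `ζ = exp(2πi/N)`, the function `Q(x) = ∏_{j=0}^{N-1} S(x|zζ^j)`,
where `z` is any `N`-th root of `1-x^N`, is independent of the choice of `z` and
satisfies `Q(xζ) = Q(x)·(1-xζ)^N/(1-x^N)`. -/
theorem Qfun_indep_and_shift (N : ℕ) (hN : Odd N) (hNpos : 0 < N)
    (ζ : ℂ) (hζ : ζ = Complex.exp (2 * π * Complex.I / N))
    (x z z' : ℂ) (hz : z ^ N = 1 - x ^ N) (hz' : z' ^ N = 1 - x ^ N)
    (hxN : x ^ N ≠ 1)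
    (hden : ∀ j : ℕ, 1 - x * ζ ^ j ≠ 0) :
    (∏ j ∈ Finset.range N, Sfun N ζ x (z * ζ ^ j)) =
      (∏ j ∈ Finset.range N, Sfun N ζ x (z' * ζ ^ j)) ∧
    (∏ j ∈ Finset.range N, Sfun N ζ (x * ζ) (z * ζ ^ j)) =
      (∏ j ∈ Finset.range N, Sfun N ζ x (z * ζ ^ j)) * (1 - x * ζ) ^ N / (1 - x ^ N) :=
  Qfun_indep_and_shift_general N hN ζ hζ x z z' hz hz' hxN
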